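/- arXiv:2412.00212 — 2 statements merged into one kernel-verified Lean document; each statement's English description precedes it below -/
import Mathlib

section
/- The minimum construction cost of the star K_{1,n} is ν_*(K_{1,n}) = (5n² + 11n)/6 for every n ≥ 3 divisible by 3, and a minimum-cost construction sequence places exactly b = ⌈n/3⌉ peripheral vertices before the hub. -/
/-!
Count positions from `0` and write `h` for the position of the hub and `L` for the sum of the
positions of the leaves. The `2n + 1` positions sum to `n(2n + 1)` and the edge to a leaf `v`
costs `2 pos(e) - h - pos(v)`, so `cost + (n + 2)h + 3L = 2n(2n + 1)`. Every edge follows the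
hub, so the elements before the hub are exactly `h` leaves filling positions `0, …, h - 1`; the
other `n - h` leaves each precede their own edge, which caps the sum of their positions at
`n² - h²`. Hence `2 cost ≥ 2n² + 4n + 3h² - 2nh - h`, with equality for the sequence listing
`h` leaves, the hub, their edges, and then the remaining leaf–edge pairs. For `n = 3t` the bound
is `15t² + 11t + 3(h - t)² - (h - t)`, which is minimal exactly at `h = t`.
-/

namespace ConsCost

variable {V : Type*} [Fintype V]

/-- The number of elements (vertices plus edges) of a graph. -/
noncomputable def numElts (G : SimpleGraph V) : ℕ :=
  Fintype.card V + Nat.card G.edgeSet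

/-- `x` is a construction sequence for `G`: a bijective listing of the vertices and
edges of `G` in which every edge appears after both of its endpoints. -/
def IsCSeq (G : SimpleGraph V) (x : Fin (numElts G) ≃ V ⊕ G.edgeSet) : Prop :=
  ∀ (e : G.edgeSet), ∀ v ∈ (e : Sym2 V), x.symm (Sum.inl v) < x.symm (Sum.inr e)

/-- The cost `ν(e,x) = (x⁻¹e − x⁻¹u) + (x⁻¹e − x⁻¹w)` of an edge `e = uw`
in the construction sequence `x`. -/
noncomputable def edgeCost (G : SimpleGraph V) (x : Fin (numElts G) ≃ V ⊕ G.edgeSet)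
    (e : G.edgeSet) : ℕ :=
  2 * (x.symm (Sum.inr e) : ℕ) -
    Sym2.lift ⟨fun u w => ((x.symm (Sum.inl u) : ℕ) + (x.symm (Sum.inl w) : ℕ)),
      fun u w => by dsimp only; omega⟩ (e : Sym2 V)

/-- The cost `ν(x)` of a construction sequence: the sum of the costs of all edges. -/
noncomputable def cost (G : SimpleGraph V) (x : Fin (numElts G) ≃ V ⊕ G.edgeSet) : ℕ :=
  ∑ᶠ e : G.edgeSet, edgeCost G x e

/-- The maximum construction cost `ν*(G)`. -/
noncomputable def maxCost (G : SimpleGraph V) : ℕ :=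
  sSup {c | ∃ x, IsCSeq G x ∧ cost G x = c}

/-- The minimum construction cost `ν_*(G)`. -/
noncomputable def minCost (G : SimpleGraph V) : ℕ :=
  sInf {c | ∃ x, IsCSeq G x ∧ cost G x = c}
/-- The star `K_{1,n}`: hub `0`, peripheral vertices `1, …, n`, and an edge from the
hub to each peripheral vertex. -/
def starGraph (n : ℕ) : SimpleGraph (Fin (n + 1)) :=
  SimpleGraph.fromRel (fun u _ => u = 0)

open Finset

lemma two_mul_sum_add_le_of_lt (s : Finset ℕ) {N : ℕ} (hs : ∀ i ∈ s, i < N) :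
    2 * ∑ i ∈ s, i + #s * (#s + 1) ≤ 2 * N * #s := by
  induction s using Finset.induction_on_max generalizing N with
  | empty => simp
  | insert a s hlt ih =>
    have ha : a + 1 ≤ N := hs a (mem_insert_self a s)
    have hs' := ih hlt
    rw [sum_insert fun h => (hlt a h).false, card_insert_of_notMem fun h => (hlt a h).false]
    nlinarith

lemma sum_range_id_mul_two_add (k : ℕ) : (∑ i ∈ range k, i) * 2 + k = k ^ 2 := by
  induction k with
  | zero => simp
  | succ k ih => rw [sum_range_succ]; linarith

lemma sum_range_odd_add_sq (b k : ℕ) :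
    ∑ j ∈ range k, (2 * (b + j) + 1) + b ^ 2 = (b + k) ^ 2 := by
  induction k with
  | zero => simp
  | succ k ih => rw [sum_range_succ]; linarith

lemma sum_val_symm {α : Type*} [Fintype α] {N : ℕ} (e : Fin N ≃ α) :
    ∑ a, (e.symm a : ℕ) = ∑ i ∈ range N, i := by
  rw [e.symm.sum_comp (fun i => (i : ℕ)), Fin.sum_univ_eq_sum_range (fun i => i)]

lemma val_symm_injective {α : Type*} {N : ℕ} (e : Fin N ≃ α) :
    Function.Injective fun a => (e.symm a : ℕ) :=
  Fin.val_injective.comp e.symm.injective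

lemma edgeCost_add {G : SimpleGraph V} {x : Fin (numElts G) ≃ V ⊕ G.edgeSet} (hx : IsCSeq G x)
    {e : G.edgeSet} {u w : V} (he : (e : Sym2 V) = s(u, w)) :
    edgeCost G x e + x.symm (.inl u) + x.symm (.inl w) = 2 * (x.symm (.inr e) : ℕ) := by
  have hu := hx e u (he ▸ Sym2.mem_mk_left u w)
  have hw := hx e w (he ▸ Sym2.mem_mk_right u w)
  rw [Fin.lt_def] at hu hw
  simp only [edgeCost, he, Sym2.lift_mk]
  omega

lemma minCost_eq_of_forall_cost_le {G : SimpleGraph V} {x₀ : Fin (numElts G) ≃ V ⊕ G.edgeSet}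
    (hx₀ : IsCSeq G x₀) (h : ∀ x, IsCSeq G x → cost G x₀ ≤ cost G x) :
    minCost G = cost G x₀ :=
  le_antisymm (Nat.sInf_le ⟨x₀, hx₀, rfl⟩)
    (le_csInf ⟨_, x₀, hx₀, rfl⟩ (by rintro _ ⟨x, hx, rfl⟩; exact h x hx))

variable {n : ℕ}

lemma starGraph_adj {u w : Fin (n + 1)} :
    (starGraph n).Adj u w ↔ u ≠ w ∧ (u = 0 ∨ w = 0) := by
  simp [starGraph]

def starEdge (i : Fin n) : (starGraph n).edgeSet :=
  ⟨s(0, i.succ), starGraph_adj.2 ⟨(Fin.succ_ne_zero i).symm, .inl rfl⟩⟩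

lemma starEdge_injective : Function.Injective (starEdge (n := n)) :=
  fun i j h => by simpa [starEdge] using congrArg Subtype.val h

lemma starEdge_surjective : Function.Surjective (starEdge (n := n)) := by
  rintro ⟨e, he⟩
  induction e using Sym2.ind with
  | _ u w =>
    obtain ⟨hne, rfl | rfl⟩ := starGraph_adj.1 he
    · obtain ⟨i, rfl⟩ := Fin.exists_succ_eq.2 hne.symm
      exact ⟨i, rfl⟩
    · obtain ⟨i, rfl⟩ := Fin.exists_succ_eq.2 hne
      exact ⟨i, Subtype.ext Sym2.eq_swap⟩

noncomputable def starEdgeEquiv : Fin n ≃ (starGraph n).edgeSet :=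
  .ofBijective starEdge ⟨starEdge_injective, starEdge_surjective⟩

@[simp]
lemma starEdgeEquiv_apply (i : Fin n) : starEdgeEquiv i = starEdge i := rfl

noncomputable instance : Fintype (starGraph n).edgeSet := .ofEquiv _ starEdgeEquiv

lemma numElts_starGraph : numElts (starGraph n) = 2 * n + 1 := by
  rw [numElts, ← Nat.card_congr starEdgeEquiv, Nat.card_eq_fintype_card, Fintype.card_fin,
    Fintype.card_fin]
  ring

section Sequence

variable {x : Fin (numElts (starGraph n)) ≃ Fin (n + 1) ⊕ (starGraph n).edgeSet}

lemma isCSeq_starGraph_iff : IsCSeq (starGraph n) x ↔ ∀ i,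
    x.symm (.inl 0) < x.symm (.inr (starEdge i)) ∧
      x.symm (.inl i.succ) < x.symm (.inr (starEdge i)) := by
  refine ⟨fun hx i => ⟨hx _ _ (Sym2.mem_mk_left _ _), hx _ _ (Sym2.mem_mk_right _ _)⟩, ?_⟩
  intro h e v hv
  obtain ⟨i, rfl⟩ := starEdge_surjective e
  obtain rfl | rfl := Sym2.mem_iff.1 hv
  exacts [(h i).1, (h i).2]

variable (x) in
noncomputable def hubPos : ℕ := x.symm (.inl 0)

variable (x) in
noncomputable def leafSum : ℕ := ∑ i : Fin n, (x.symm (.inl i.succ) : ℕ)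

lemma cost_add_hubPos_add_leafSum (hx : IsCSeq (starGraph n) x) :
    cost (starGraph n) x + (n + 2) * hubPos x + 3 * leafSum x = 2 * n * (2 * n + 1) := by
  have hcost : cost (starGraph n) x + n * hubPos x + leafSum x =
      2 * ∑ i : Fin n, (x.symm (.inr (starEdge i)) : ℕ) := by
    rw [cost, ← finsum_comp_equiv starEdgeEquiv, finsum_eq_sum_of_fintype, mul_sum,
      hubPos, leafSum]
    simpa [sum_add_distrib, add_assoc] using
      sum_congr (s₁ := univ) rfl fun i _ => edgeCost_add hx (e := starEdge i) rfl
  have htotal : hubPos x + leafSum x + ∑ i : Fin n, (x.symm (.inr (starEdge i)) : ℕ) =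
      ∑ j ∈ range (2 * n + 1), j := by
    rw [← numElts_starGraph, ← sum_val_symm x, Fintype.sum_sum_type, Fin.sum_univ_succ,
      ← starEdgeEquiv.sum_comp]
    rfl
  have := sum_range_id_mul_two_add (2 * n + 1)
  nlinarith

variable (x) in
noncomputable def leavesBefore : Finset (Fin n) :=
  {i | x.symm (.inl i.succ) < x.symm (.inl 0)}

variable (x) in
lemma natCard_leavesBefore :
    Nat.card {v : Fin (n + 1) // v ≠ 0 ∧ x.symm (.inl v) < x.symm (.inl 0)} =
      #(leavesBefore x) := by
  rw [Nat.card_eq_fintype_card, Fintype.card_subtype, ← card_map (Fin.succEmb n)]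
  congr 1
  ext v
  induction v using Fin.cases <;> simp [leavesBefore]

lemma val_symm_inl_succ_injective :
    Function.Injective fun i : Fin n => (x.symm (.inl i.succ) : ℕ) :=
  (val_symm_injective x).comp (Sum.inl_injective.comp (Fin.succ_injective n))

lemma hubPos_lt_val_symm_inr (hx : IsCSeq (starGraph n) x) (e : (starGraph n).edgeSet) :
    hubPos x < x.symm (.inr e) := by
  obtain ⟨i, rfl⟩ := starEdge_surjective e
  exact (isCSeq_starGraph_iff.1 hx i).1

lemma image_leavesBefore (hx : IsCSeq (starGraph n) x) :
    (leavesBefore x).image (fun i => (x.symm (.inl i.succ) : ℕ)) = range (hubPos x) := by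
  ext j
  simp only [mem_image, leavesBefore, mem_filter, mem_univ, true_and, mem_range, Fin.lt_def]
  refine ⟨fun ⟨i, hi, hij⟩ => hij ▸ hi, fun hj => ?_⟩
  have hjN : j < numElts (starGraph n) := hj.trans (x.symm (.inl 0)).isLt
  obtain ⟨a, rfl⟩ : ∃ a, (x.symm a : ℕ) = j := ⟨x ⟨j, hjN⟩, by simp⟩
  rcases a with v | e
  · induction v using Fin.cases with
    | zero => exact (lt_irrefl _ hj).elim
    | succ i => exact ⟨i, hj, rfl⟩
  · exact absurd hj (hubPos_lt_val_symm_inr hx e).not_gt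

lemma card_leavesBefore (hx : IsCSeq (starGraph n) x) : #(leavesBefore x) = hubPos x := by
  rw [← card_range (hubPos x), ← image_leavesBefore hx,
    card_image_of_injective _ val_symm_inl_succ_injective]

lemma sum_leavesBefore (hx : IsCSeq (starGraph n) x) :
    ∑ i ∈ leavesBefore x, (x.symm (.inl i.succ) : ℕ) = ∑ j ∈ range (hubPos x), j := by
  rw [← image_leavesBefore hx, sum_image fun i _ j _ h => val_symm_inl_succ_injective h]

lemma sum_add_sq_le (hx : IsCSeq (starGraph n) x) (A : Finset (Fin n)) :
    ∑ i ∈ A, (x.symm (.inl i.succ) : ℕ) + #A ^ 2 ≤ 2 * n * #A := by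
  set T := (A.map (Fin.succEmb n)).disjSum (A.map starEdgeEquiv.toEmbedding)
  have hcard : #(T.image fun a => (x.symm a : ℕ)) = 2 * #A := by
    rw [card_image_of_injective _ (val_symm_injective x), card_disjSum, card_map, card_map]
    ring
  have hsum : ∑ j ∈ T.image (fun a => (x.symm a : ℕ)), j =
      ∑ i ∈ A, (x.symm (.inl i.succ) : ℕ) +
        ∑ i ∈ A, (x.symm (.inr (starEdge i)) : ℕ) := by
    rw [sum_image fun a _ b _ h => val_symm_injective x h, sum_disjSum, sum_map, sum_map]
    rfl
  have hleaf_lt_edge : ∑ i ∈ A, ((x.symm (.inl i.succ) : ℕ) + 1) ≤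
      ∑ i ∈ A, (x.symm (.inr (starEdge i)) : ℕ) :=
    sum_le_sum fun i _ => (isCSeq_starGraph_iff.1 hx i).2
  have htop := two_mul_sum_add_le_of_lt (T.image fun a => (x.symm a : ℕ)) (N := 2 * n + 1)
    (forall_mem_image.2 fun a _ => numElts_starGraph (n := n) ▸ (x.symm a).isLt)
  rw [hcard, hsum] at htop
  rw [sum_add_distrib, sum_const, smul_eq_mul, mul_one] at hleaf_lt_edge
  nlinarith

lemma leafSum_add_sq_le (hx : IsCSeq (starGraph n) x) :
    leafSum x + hubPos x ^ 2 ≤ ∑ j ∈ range (hubPos x), j + n ^ 2 := by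
  have hafter := sum_add_sq_le hx (leavesBefore x)ᶜ
  have hcard := card_add_card_compl (leavesBefore x)
  rw [card_leavesBefore hx, Fintype.card_fin] at hcard
  rw [leafSum, ← sum_add_sum_compl (leavesBefore x), sum_leavesBefore hx]
  nlinarith

lemma two_mul_cost_lower_bound (hx : IsCSeq (starGraph n) x) :
    2 * n ^ 2 + 4 * n + 3 * hubPos x ^ 2 ≤
      2 * cost (starGraph n) x + 2 * n * hubPos x + hubPos x := by
  have := cost_add_hubPos_add_leafSum hx
  have := leafSum_add_sq_le hx
  have := sum_range_id_mul_two_add (hubPos x)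
  nlinarith

end Sequence

section Construction

variable {b : ℕ}

/-- Positions in the sequence listing the leaves `1, …, b`, then the hub, then the edges to these
leaves, then every remaining leaf immediately followed by its edge. -/
def starPos (b : ℕ) : Fin (n + 1) ⊕ Fin n → ℕ
  | .inl v => if (v : ℕ) = 0 then b else if (v : ℕ) ≤ b then v - 1 else 2 * v - 1
  | .inr i => if (i : ℕ) < b then b + 1 + i else 2 * i + 2

lemma starPos_injective : Function.Injective (starPos (n := n) b) := by
  rintro (v | i) (w | j) h <;>
    simp only [starPos, Sum.inl.injEq, Sum.inr.injEq, reduceCtorEq, Fin.ext_iff] at h ⊢ <;>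
    split_ifs at h <;> omega

lemma starPos_lt (hb : b ≤ n) (a : Fin (n + 1) ⊕ Fin n) : starPos b a < 2 * n + 1 := by
  rcases a with v | i
  · have := v.isLt
    simp only [starPos]
    split_ifs <;> omega
  · have := i.isLt
    simp only [starPos]
    split_ifs <;> omega

noncomputable def starSeq (hb : b ≤ n) :
    Fin (numElts (starGraph n)) ≃ Fin (n + 1) ⊕ (starGraph n).edgeSet :=
  have hbij : Function.Bijective fun a => (⟨starPos b a, starPos_lt hb a⟩ : Fin (2 * n + 1)) :=
    (Fintype.bijective_iff_injective_and_card _).2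
      ⟨fun a a' h => starPos_injective (Fin.val_eq_of_eq h), by simp; ring⟩
  (finCongr numElts_starGraph).trans
    ((Equiv.ofBijective _ hbij).symm.trans (.sumCongr (.refl _) starEdgeEquiv))

lemma val_starSeq_symm_inl (hb : b ≤ n) (v : Fin (n + 1)) :
    ((starSeq hb).symm (.inl v) : ℕ) = starPos b (.inl v) := by
  simp [starSeq]

lemma val_starSeq_symm_inr (hb : b ≤ n) (i : Fin n) :
    ((starSeq hb).symm (.inr (starEdge i)) : ℕ) = starPos b (.inr i) := by
  simp [starSeq, ← starEdgeEquiv_apply]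

lemma isCSeq_starSeq (hb : b ≤ n) : IsCSeq (starGraph n) (starSeq hb) := by
  refine isCSeq_starGraph_iff.2 fun i => ?_
  simp only [Fin.lt_def, val_starSeq_symm_inl, val_starSeq_symm_inr, starPos, Fin.val_zero,
    Fin.val_succ]
  constructor <;> split_ifs <;> omega

lemma hubPos_starSeq (hb : b ≤ n) : hubPos (starSeq hb) = b := by
  simp [hubPos, val_starSeq_symm_inl, starPos]

lemma leafSum_starSeq_add_sq (hb : b ≤ n) :
    leafSum (starSeq hb) + b ^ 2 = ∑ j ∈ range b, j + n ^ 2 := by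
  obtain ⟨k, rfl⟩ := Nat.exists_eq_add_of_le hb
  have hleaf (i : Fin (b + k)) : ((starSeq hb).symm (.inl i.succ) : ℕ) =
      if (i : ℕ) < b then (i : ℕ) else 2 * i + 1 := by
    simp only [val_starSeq_symm_inl, starPos, Fin.val_succ, Nat.add_one_ne_zero, if_false]
    split_ifs <;> omega
  rw [leafSum, sum_congr rfl fun i _ => hleaf i,
    Fin.sum_univ_eq_sum_range (fun i => if i < b then i else 2 * i + 1), sum_range_add,
    sum_congr rfl fun i hi => if_pos (mem_range.1 hi),
    sum_congr rfl fun j _ => if_neg (Nat.not_lt.2 (Nat.le_add_right b j)), add_assoc,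
    sum_range_odd_add_sq]

lemma two_mul_cost_starSeq (hb : b ≤ n) :
    2 * cost (starGraph n) (starSeq hb) + 2 * n * b + b = 2 * n ^ 2 + 4 * n + 3 * b ^ 2 := by
  have := cost_add_hubPos_add_leafSum (isCSeq_starSeq hb)
  have := leafSum_starSeq_add_sq hb
  have := sum_range_id_mul_two_add b
  rw [hubPos_starSeq] at *
  nlinarith

end Construction

lemma cost_starSeq_add_sq_le {t : ℕ}
    {x : Fin (numElts (starGraph (3 * t))) ≃ Fin (3 * t + 1) ⊕ (starGraph (3 * t)).edgeSet}
    (hx : IsCSeq (starGraph (3 * t)) x) :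
    (cost (starGraph (3 * t)) (starSeq (Nat.le_mul_of_pos_left t three_pos)) : ℤ) +
      ((hubPos x : ℤ) - t) ^ 2 ≤ cost (starGraph (3 * t)) x := by
  have hlower := two_mul_cost_lower_bound hx
  have hopt := two_mul_cost_starSeq (Nat.le_mul_of_pos_left t three_pos)
  have := Int.le_self_sq ((hubPos x : ℤ) - t)
  zify at hlower hopt
  nlinarith

theorem minCost_star_general (n : ℕ) (hdvd : 3 ∣ n) :
    6 * minCost (starGraph n) = 5 * n ^ 2 + 11 * n ∧
      ∀ (x : Fin (numElts (starGraph n)) ≃ Fin (n + 1) ⊕ (starGraph n).edgeSet),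
        IsCSeq (starGraph n) x → cost (starGraph n) x = minCost (starGraph n) →
          Nat.card {v : Fin (n + 1) //
            v ≠ 0 ∧ x.symm (Sum.inl v) < x.symm (Sum.inl 0)} = n / 3 := by
  obtain ⟨t, rfl⟩ := hdvd
  have hb : t ≤ 3 * t := Nat.le_mul_of_pos_left t three_pos
  have hmin : minCost (starGraph (3 * t)) = cost (starGraph (3 * t)) (starSeq hb) :=
    minCost_eq_of_forall_cost_le (isCSeq_starSeq hb) fun x hx => by
      have := cost_starSeq_add_sq_le hx
      have := sq_nonneg ((hubPos x : ℤ) - t)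
      omega
  refine ⟨?_, fun x hx hcost => ?_⟩
  · have := two_mul_cost_starSeq hb
    rw [hmin]
    nlinarith
  · have hhub : (hubPos x : ℤ) = t := by
      have := cost_starSeq_add_sq_le hx
      rw [hcost, hmin] at this
      nlinarith
    rw [natCard_leavesBefore, card_leavesBefore hx]
    omega

/-- For `n ≥ 3` divisible by `3`, `ν_*(K_{1,n}) = (5n² + 11n)/6`, and every
minimum-cost construction sequence places exactly `⌈n/3⌉ = n/3` peripheral vertices
before the hub. -/
theorem minCost_star (n : ℕ) (hn : 3 ≤ n) (hdvd : 3 ∣ n) :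
    6 * minCost (starGraph n) = 5 * n ^ 2 + 11 * n ∧
      ∀ (x : Fin (numElts (starGraph n)) ≃ Fin (n + 1) ⊕ (starGraph n).edgeSet),
        IsCSeq (starGraph n) x → cost (starGraph n) x = minCost (starGraph n) →
          Nat.card {v : Fin (n + 1) //
            v ≠ 0 ∧ x.symm (Sum.inl v) < x.symm (Sum.inl 0)} = n / 3 :=
  minCost_star_general n hdvd

end ConsCost
end

section
/- The maximum construction cost of the suspension of the n-cycle is ν*(ΣC_n) = 13n² + 2n for all n ≥ 4. -/
namespace ConsCost

variable {V : Type*} [Fintype V]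

/-- The suspension `ΣC_n` of the `n`-cycle: the cycle `C_n` together with two new
mutually nonadjacent vertices, each joined to every cycle vertex. -/
def suspCycle (n : ℕ) : SimpleGraph (Fin n ⊕ Fin 2) :=
  SimpleGraph.fromRel (fun a b =>
    (∃ i j : Fin n, a = Sum.inl i ∧ b = Sum.inl j ∧ (SimpleGraph.cycleGraph n).Adj i j) ∨
      (∃ (s : Fin 2) (i : Fin n), a = Sum.inr s ∧ b = Sum.inl i))


/-! Counting positions from `0`, an edge `e = uw` of a construction sequence `x` costs
`2 pos e - pos u - pos w`, and the positions of all `N` elements are `0, …, N - 1`. Summing over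
the edges and using the handshake lemma gives `ν(x) + ∑ᵥ (deg v + 2) pos v = N (N - 1)`, so
maximizing the cost means minimizing `∑ᵥ (deg v + 2) pos v` over all placements of the vertices
at distinct positions. In `ΣC_n` the cycle vertices have weight `6` and the two apexes weight
`n + 2 ≥ 6`, so the minimum `3n² + 10n + 2` is attained by listing the apexes, then the cycle,
then the edges, which gives `(4n + 2)(4n + 1) - (3n² + 10n + 2) = 13n² + 2n`. -/

open Finset

theorem sum_range_card_le_sum (s : Finset ℕ) : ∑ k ∈ range #s, k ≤ ∑ t ∈ s, t := by
  induction s using Finset.induction_on_max with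
  | empty => simp
  | insert a s ha ih =>
    have has : a ∉ s := fun h => (ha a h).false
    have hcard : #s ≤ a := by
      simpa using card_le_card (fun t ht => mem_range.2 (ha t ht) : s ⊆ range a)
    rw [card_insert_of_notMem has, sum_range_succ, sum_insert has]
    omega

theorem sum_range_card_le_sum_of_injective {α : Type*} [Fintype α] {f : α → ℕ}
    (hf : Function.Injective f) : ∑ k ∈ range (Fintype.card α), k ≤ ∑ a, f a := by
  classical
  simpa [card_image_of_injective _ hf, sum_image hf.injOn] using
    sum_range_card_le_sum (univ.image f)

section ConstructionSequence

variable (G : SimpleGraph V)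

def endpointSum (f : V → ℕ) : Sym2 V → ℕ :=
  Sym2.lift ⟨fun u w => f u + f w, fun u w => add_comm (f u) (f w)⟩

theorem sum_endpointSum_eq_sum_degree_mul [DecidableEq V] [DecidableRel G.Adj]
    (f : V → ℕ) :
    ∑ e : G.edgeSet, endpointSum f e = ∑ v, G.degree v * f v := by
  have hedge : ∀ e ∈ G.edgeSet, endpointSum f e = ∑ v, if v ∈ e then f v else 0 := by
    intro e he
    induction e using Sym2.ind with
    | h u w =>
      rw [← sum_filter, show ({v | v ∈ s(u, w)} : Finset V) = {u, w} by ext; simp,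
        sum_pair (G.ne_of_adj he)]
      rfl
  have hdeg : ∀ v, #{e : G.edgeSet | v ∈ e.1} = G.degree v := by
    intro v
    rw [← G.card_incidenceSet_eq_degree, ← Fintype.card_subtype]
    exact Fintype.card_congr (Equiv.subtypeSubtypeEquivSubtypeInter (· ∈ G.edgeSet) (v ∈ ·))
  calc _ = ∑ e : G.edgeSet, ∑ v, if v ∈ e.1 then f v else 0 :=
        sum_congr rfl fun e _ => hedge e e.2
    _ = ∑ v, ∑ e : G.edgeSet, if v ∈ e.1 then f v else 0 := sum_comm
    _ = ∑ v, G.degree v * f v := by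
        refine sum_congr rfl fun v _ => ?_
        rw [sum_ite, sum_const_zero, add_zero, sum_const, smul_eq_mul, hdeg]

theorem edgeCost_add_endpointSum {x : Fin (numElts G) ≃ V ⊕ G.edgeSet} (hx : IsCSeq G x)
    (e : G.edgeSet) :
    edgeCost G x e + endpointSum (fun v => x.symm (.inl v)) e = 2 * x.symm (.inr e) := by
  obtain ⟨e, he⟩ := e
  induction e using Sym2.ind with
  | h u w =>
    have hu := hx ⟨s(u, w), he⟩ u (Sym2.mem_mk_left u w)
    have hw := hx ⟨s(u, w), he⟩ w (Sym2.mem_mk_right u w)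
    rw [Fin.lt_def] at hu hw
    simp only [edgeCost, endpointSum, Sym2.lift_mk]
    omega

theorem sum_symm_val_mul_two [Fintype G.edgeSet] (x : Fin (numElts G) ≃ V ⊕ G.edgeSet) :
    (∑ v, (x.symm (.inl v) : ℕ) + ∑ e, (x.symm (.inr e) : ℕ)) * 2
      = numElts G * (numElts G - 1) := by
  rw [← Fintype.sum_sum_type (fun z => (x.symm z : ℕ)),
    Equiv.sum_comp x.symm (fun k => (k : ℕ)), Fin.sum_univ_eq_sum_range (fun k => k),
    sum_range_id_mul_two]

theorem cost_add_sum_degree_add_two_mul [DecidableRel G.Adj]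
    {x : Fin (numElts G) ≃ V ⊕ G.edgeSet} (hx : IsCSeq G x) :
    cost G x + ∑ v, (G.degree v + 2) * (x.symm (.inl v) : ℕ) = numElts G * (numElts G - 1) := by
  classical
  have hedges := sum_congr rfl fun e (_ : e ∈ univ) => edgeCost_add_endpointSum G hx e
  rw [sum_add_distrib, sum_endpointSum_eq_sum_degree_mul, ← mul_sum] at hedges
  rw [← sum_symm_val_mul_two G x, cost, finsum_eq_sum_of_fintype]
  simp only [add_mul, sum_add_distrib, ← mul_sum]
  linarith

theorem exists_isCSeq_symm_inl_eq (σ : V ≃ Fin (Fintype.card V)) :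
    ∃ x, IsCSeq G x ∧ ∀ v, (x.symm (.inl v) : ℕ) = σ v := by
  let y : V ⊕ G.edgeSet ≃ Fin (numElts G) :=
    (Equiv.sumCongr σ (Finite.equivFin G.edgeSet)).trans finSumFinEquiv
  have hy : ∀ z, (y z : ℕ)
      = Sum.elim (fun v => (σ v : ℕ)) (fun e => Fintype.card V + Finite.equivFin _ e) z := by
    rintro (v | e) <;> rfl
  refine ⟨y.symm, fun e v _ => ?_, fun v => by simp [hy]⟩
  simp only [Equiv.symm_symm, Fin.lt_def, hy, Sum.elim_inl, Sum.elim_inr]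
  omega

end ConstructionSequence

section SuspCycle

variable {n : ℕ}

@[simp]
theorem suspCycle_adj_inl_inl {i j : Fin n} :
    (suspCycle n).Adj (.inl i) (.inl j) ↔ (SimpleGraph.cycleGraph n).Adj i j := by
  simp [suspCycle, SimpleGraph.fromRel_adj, SimpleGraph.adj_comm _ j i]
  exact fun h => h.ne

@[simp]
theorem suspCycle_adj_inl_inr {i : Fin n} {s : Fin 2} : (suspCycle n).Adj (.inl i) (.inr s) :=
  ⟨Sum.inl_ne_inr, .inr (.inr ⟨s, i, rfl, rfl⟩)⟩

@[simp]
theorem suspCycle_adj_inr_inl {i : Fin n} {s : Fin 2} : (suspCycle n).Adj (.inr s) (.inl i) :=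
  suspCycle_adj_inl_inr.symm

@[simp]
theorem suspCycle_adj_inr_inr {s t : Fin 2} : ¬ (suspCycle n).Adj (.inr s) (.inr t) := by
  simp [suspCycle, SimpleGraph.fromRel_adj]

theorem neighborFinset_suspCycle_inl [DecidableRel (suspCycle n).Adj] (i : Fin n) :
    (suspCycle n).neighborFinset (.inl i)
      = ((SimpleGraph.cycleGraph n).neighborFinset i).disjSum univ := by
  ext (j | s) <;> simp

theorem neighborFinset_suspCycle_inr [DecidableRel (suspCycle n).Adj] (s : Fin 2) :
    (suspCycle n).neighborFinset (.inr s) = univ.disjSum ∅ := by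
  ext (j | t) <;> simp

theorem degree_suspCycle_inl [DecidableRel (suspCycle n).Adj] (hn : 3 ≤ n) (i : Fin n) :
    (suspCycle n).degree (.inl i) = 4 := by
  obtain ⟨m, rfl⟩ : ∃ m, n = m + 3 := ⟨n - 3, by omega⟩
  rw [← SimpleGraph.card_neighborFinset_eq_degree, neighborFinset_suspCycle_inl, card_disjSum,
    SimpleGraph.card_neighborFinset_eq_degree, SimpleGraph.cycleGraph_degree_three_le, card_univ,
    Fintype.card_fin]

theorem degree_suspCycle_inr [DecidableRel (suspCycle n).Adj] (s : Fin 2) :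
    (suspCycle n).degree (.inr s) = n := by
  rw [← SimpleGraph.card_neighborFinset_eq_degree, neighborFinset_suspCycle_inr, card_disjSum,
    card_univ, Fintype.card_fin, card_empty, add_zero]

theorem sum_degree_add_two_mul_suspCycle [DecidableRel (suspCycle n).Adj] (hn : 3 ≤ n)
    (p : Fin n ⊕ Fin 2 → ℕ) :
    ∑ v, ((suspCycle n).degree v + 2) * p v
      = 6 * ∑ i, p (.inl i) + (n + 2) * (p (.inr 0) + p (.inr 1)) := by
  simp [Fintype.sum_sum_type, degree_suspCycle_inl hn, degree_suspCycle_inr, mul_sum, mul_add]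

theorem numElts_suspCycle (hn : 3 ≤ n) : numElts (suspCycle n) = 4 * n + 2 := by
  classical
  have h := (suspCycle n).sum_degrees_eq_twice_card_edges
  simp only [Fintype.sum_sum_type, degree_suspCycle_inl hn, degree_suspCycle_inr, sum_const,
    card_univ, Fintype.card_fin, smul_eq_mul] at h
  rw [numElts, Nat.card_eq_fintype_card, ← SimpleGraph.edgeFinset_card, Fintype.card_sum,
    Fintype.card_fin, Fintype.card_fin]
  omega

theorem le_sum_degree_add_two_mul_suspCycle [DecidableRel (suspCycle n).Adj] (hn : 4 ≤ n)
    {p : Fin n ⊕ Fin 2 → ℕ} (hp : Function.Injective p) :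
    3 * n ^ 2 + 10 * n + 2 ≤ ∑ v, ((suspCycle n).degree v + 2) * p v := by
  have hgauss := sum_range_card_le_sum_of_injective hp
  have hmul := sum_range_id_mul_two (Fintype.card (Fin n ⊕ Fin 2))
  have hapex : 1 ≤ p (.inr 0) + p (.inr 1) := by
    have := hp.ne (a₁ := .inr 0) (a₂ := .inr 1) (by simp)
    omega
  simp only [Fintype.card_sum, Fintype.card_fin, Fintype.sum_sum_type, Fin.sum_univ_two,
    Nat.add_succ_sub_one] at hgauss hmul
  rw [sum_degree_add_two_mul_suspCycle (by omega)]
  obtain ⟨m, rfl⟩ : ∃ m, n = m + 4 := ⟨n - 4, by omega⟩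
  nlinarith [Nat.mul_le_mul_left m hapex]

def apexFirst (n : ℕ) : Fin n ⊕ Fin 2 ≃ Fin (Fintype.card (Fin n ⊕ Fin 2)) :=
  (Equiv.sumComm _ _).trans (finSumFinEquiv.trans (finCongr (by simp [add_comm])))

@[simp]
theorem apexFirst_inl (i : Fin n) : (apexFirst n (.inl i) : ℕ) = 2 + i := by
  simp [apexFirst]

@[simp]
theorem apexFirst_inr (s : Fin 2) : (apexFirst n (.inr s) : ℕ) = s := by
  simp [apexFirst]

theorem sum_degree_add_two_mul_apexFirst [DecidableRel (suspCycle n).Adj] (hn : 3 ≤ n) :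
    ∑ v, ((suspCycle n).degree v + 2) * (apexFirst n v : ℕ) = 3 * n ^ 2 + 10 * n + 2 := by
  have hmul := sum_range_id_mul_two n
  rw [sum_degree_add_two_mul_suspCycle hn]
  simp only [apexFirst_inl, apexFirst_inr, sum_add_distrib, sum_const, card_univ,
    Fintype.card_fin, smul_eq_mul, Fin.sum_univ_eq_sum_range (fun i => i), Fin.val_zero,
    Fin.val_one]
  obtain ⟨m, rfl⟩ : ∃ m, n = m + 1 := ⟨n - 1, by omega⟩
  rw [Nat.add_sub_cancel] at hmul
  nlinarith

end SuspCycle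

/-- `ν*(ΣC_n) = 13n² + 2n` for `n ≥ 4`. -/
theorem maxCost_suspCycle (n : ℕ) (hn : 4 ≤ n) :
    maxCost (suspCycle n) = 13 * n ^ 2 + 2 * n := by
  classical
  have hN : numElts (suspCycle n) * (numElts (suspCycle n) - 1) = (4 * n + 2) * (4 * n + 1) := by
    rw [numElts_suspCycle (by omega)]
    rfl
  refine IsGreatest.csSup_eq ⟨?_, ?_⟩
  · obtain ⟨x, hx, hpos⟩ := exists_isCSeq_symm_inl_eq (suspCycle n) (apexFirst n)
    refine ⟨x, hx, ?_⟩
    have h := cost_add_sum_degree_add_two_mul _ hx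
    simp only [hpos, sum_degree_add_two_mul_apexFirst (by omega : 3 ≤ n), hN] at h
    nlinarith
  · rintro _ ⟨x, hx, rfl⟩
    have h := cost_add_sum_degree_add_two_mul _ hx
    have hlow := le_sum_degree_add_two_mul_suspCycle hn (p := fun v => x.symm (.inl v))
      (Fin.val_injective.comp (x.symm.injective.comp Sum.inl_injective))
    rw [hN] at h
    nlinarith

end ConsCost
end
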